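/- Let X ∈ ℝ₊^{n₁×m₁} and let A be the (n₁+m₁)×(n₁+m₁) symmetric matrix with zero diagonal blocks and off-diagonal blocks X and Xᵀ. Then st₊(A) = 2·rk₊(X). -/

import Mathlib

open Matrix

noncomputable def sntRank {m : Type*} [Fintype m] (A : Matrix m m ℝ) : ℕ :=
  sInf {k : ℕ | ∃ B : Matrix m (Fin k) ℝ, ∃ C : Matrix (Fin k) (Fin k) ℝ,
    (∀ i j, 0 ≤ B i j) ∧ (∀ i j, 0 ≤ C i j) ∧ C.IsSymm ∧ A = B * C * Bᵀ}


noncomputable def nnRank {m n : Type*} [Fintype m] [Fintype n] (A : Matrix m n ℝ) : ℕ :=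
  sInf {k : ℕ | ∃ U : Matrix m (Fin k) ℝ, ∃ V : Matrix n (Fin k) ℝ,
    (∀ i j, 0 ≤ U i j) ∧ (∀ i j, 0 ≤ V i j) ∧ A = U * Vᵀ}

/-!
If `X = U Vᵀ` is a nonnegative factorization of size `r`, then
`A = diag(U, V) · [[0, I], [I, 0]] · diag(U, V)ᵀ` is a symmetric nonnegative trifactorization of
size `2r`. Conversely, let `A = B C Bᵀ` with `B = [B₁; B₂]`, and let `P`, `Q` be the sets of
nonzero columns of `B₁`, `B₂`. Since all terms are nonnegative, the zero diagonal blocks force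
`C` to vanish on `P × P` and on `Q × Q`; hence a term `B₁ i a C a b B₂ j b` of
`X = B₁ C B₂ᵀ` can only be nonzero when `a ∈ P \ Q` and `b ∈ Q \ P`. Grouping the terms by `a`,
resp. by `b`, gives nonnegative factorizations of `X` of sizes `|P \ Q|` and `|Q \ P|`, and these
two disjoint sets have at most `k` elements in total.
-/

open Finset

section NonzeroCols

variable {R : Type*} {m n k : Type*} [Fintype k]

open Classical in
noncomputable def nonzeroCols [Zero R] (B : Matrix m k R) : Finset k := {a | ∃ i, B i a ≠ 0}

theorem mem_nonzeroCols [Zero R] {B : Matrix m k R} {a : k} :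
    a ∈ nonzeroCols B ↔ ∃ i, B i a ≠ 0 := by
  simp [nonzeroCols]

theorem apply_eq_zero_of_notMem_nonzeroCols [Zero R] {B : Matrix m k R} {a : k}
    (ha : a ∉ nonzeroCols B) (i : m) : B i a = 0 := by
  by_contra hi
  exact ha (mem_nonzeroCols.2 ⟨i, hi⟩)

theorem mul_mul_transpose_apply [Semiring R] (B₁ : Matrix m k R) (C : Matrix k k R)
    (B₂ : Matrix n k R) (i : m) (j : n) :
    (B₁ * C * B₂ᵀ) i j = ∑ a, ∑ b, B₁ i a * C a b * B₂ j b := by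
  simp only [mul_apply, transpose_apply, sum_mul]
  exact sum_comm

variable [Semiring R] [PartialOrder R] [IsOrderedRing R] [NoZeroDivisors R]

theorem apply_eq_zero_of_mul_mul_transpose_eq_zero {B : Matrix m k R} {C : Matrix k k R}
    (hB : ∀ i a, 0 ≤ B i a) (hC : ∀ a b, 0 ≤ C a b) (h : B * C * Bᵀ = 0) {a b : k}
    (ha : a ∈ nonzeroCols B) (hb : b ∈ nonzeroCols B) : C a b = 0 := by
  obtain ⟨i, hi⟩ := mem_nonzeroCols.1 ha
  obtain ⟨i', hi'⟩ := mem_nonzeroCols.1 hb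
  have hterm_nonneg : ∀ a b, 0 ≤ B i a * C a b * B i' b := fun a b =>
    mul_nonneg (mul_nonneg (hB _ _) (hC _ _)) (hB _ _)
  have hsum : ∑ a, ∑ b, B i a * C a b * B i' b = 0 := by
    rw [← mul_mul_transpose_apply, h, Matrix.zero_apply]
  have hterm : B i a * C a b * B i' b = 0 :=
    (sum_eq_zero_iff_of_nonneg fun b _ => hterm_nonneg a b).1
      ((sum_eq_zero_iff_of_nonneg fun a _ => sum_nonneg fun b _ => hterm_nonneg a b).1 hsum a
        (mem_univ a)) b (mem_univ b)
  simpa [hi, hi'] using hterm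

theorem mul_apply_eq_zero_of_mul_mul_transpose_eq_zero {B : Matrix m k R} {C : Matrix k k R}
    (hB : ∀ i a, 0 ≤ B i a) (hC : ∀ a b, 0 ≤ C a b) (h : B * C * Bᵀ = 0) {b : k}
    (hb : b ∈ nonzeroCols B) (i : m) : (B * C) i b = 0 := by
  rw [mul_apply]
  refine sum_eq_zero fun a _ => ?_
  by_cases ha : a ∈ nonzeroCols B
  · rw [apply_eq_zero_of_mul_mul_transpose_eq_zero hB hC h ha hb, mul_zero]
  · rw [apply_eq_zero_of_notMem_nonzeroCols ha, zero_mul]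

end NonzeroCols

section Reindex

variable {R : Type*} [Semiring R] {m n ι : Type*} [Fintype ι]

theorem submatrix_equivFin_mul_transpose (U : Matrix m ι R) (V : Matrix n ι R) :
    U.submatrix id (Fintype.equivFin ι).symm * (V.submatrix id (Fintype.equivFin ι).symm)ᵀ =
      U * Vᵀ := by
  rw [transpose_submatrix, submatrix_mul_equiv, submatrix_id_id]

theorem submatrix_equivFin_mul_mul_transpose (B : Matrix m ι R) (C : Matrix ι ι R) :
    B.submatrix id (Fintype.equivFin ι).symm *
        C.submatrix (Fintype.equivFin ι).symm (Fintype.equivFin ι).symm *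
        (B.submatrix id (Fintype.equivFin ι).symm)ᵀ =
      B * C * Bᵀ := by
  rw [transpose_submatrix, submatrix_mul_equiv, submatrix_mul_equiv, submatrix_id_id]

end Reindex

section NNRank

variable {m n ι : Type*} [Fintype m] [Fintype n] [Fintype ι]

theorem nnRank_le_card (U : Matrix m ι ℝ) (V : Matrix n ι ℝ) (hU : ∀ i a, 0 ≤ U i a)
    (hV : ∀ j a, 0 ≤ V j a) : nnRank (U * Vᵀ) ≤ Fintype.card ι := by
  exact Nat.sInf_le ⟨_, _, fun _ _ => hU _ _, fun _ _ => hV _ _,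
    (submatrix_equivFin_mul_transpose U V).symm⟩

theorem exists_nnRank_factorization {A : Matrix m n ℝ} (hA : ∀ i j, 0 ≤ A i j) :
    ∃ U : Matrix m (Fin (nnRank A)) ℝ, ∃ V : Matrix n (Fin (nnRank A)) ℝ,
      (∀ i a, 0 ≤ U i a) ∧ (∀ j a, 0 ≤ V j a) ∧ A = U * Vᵀ := by
  classical
  have hne : {k : ℕ | ∃ U : Matrix m (Fin k) ℝ, ∃ V : Matrix n (Fin k) ℝ,
      (∀ i j, 0 ≤ U i j) ∧ (∀ i j, 0 ≤ V i j) ∧ A = U * Vᵀ}.Nonempty :=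
    ⟨_, _, _, fun _ _ => hA _ _, fun i j => by simp [one_apply, apply_ite],
      ((submatrix_equivFin_mul_transpose A 1).trans (by simp)).symm⟩
  exact Nat.sInf_mem hne

theorem nnRank_le_card_of_forall_notMem (U : Matrix m ι ℝ) (V : Matrix n ι ℝ)
    (hU : ∀ i a, 0 ≤ U i a) (hV : ∀ j a, 0 ≤ V j a) (s : Finset ι)
    (hs : ∀ a ∉ s, ∀ i j, U i a * V j a = 0) : nnRank (U * Vᵀ) ≤ #s := by
  have hrestrict : U * Vᵀ = U.submatrix id ((↑) : s → ι) * (V.submatrix id ((↑) : s → ι))ᵀ := by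
    ext i j
    simp only [mul_apply, transpose_apply, submatrix_apply, id]
    rw [sum_coe_sort s fun a => U i a * V j a]
    exact (sum_subset (subset_univ s) fun a _ ha => hs a ha i j).symm
  rw [hrestrict, ← Fintype.card_coe s]
  exact nnRank_le_card _ _ (fun _ _ => hU _ _) fun _ _ => hV _ _

end NNRank

section SNTRank

variable {m n ι : Type*} [Fintype m] [Fintype n] [Fintype ι]

theorem sntRank_le_card (B : Matrix m ι ℝ) (C : Matrix ι ι ℝ) (hB : ∀ i a, 0 ≤ B i a)
    (hC : ∀ a b, 0 ≤ C a b) (hCs : C.IsSymm) : sntRank (B * C * Bᵀ) ≤ Fintype.card ι := by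
  exact Nat.sInf_le ⟨_, _, fun _ _ => hB _ _, fun _ _ => hC _ _, hCs.submatrix _,
    (submatrix_equivFin_mul_mul_transpose B C).symm⟩

theorem exists_sntRank_factorization {A : Matrix m m ℝ} (hA : ∀ i j, 0 ≤ A i j)
    (hAs : A.IsSymm) :
    ∃ B : Matrix m (Fin (sntRank A)) ℝ, ∃ C : Matrix (Fin (sntRank A)) (Fin (sntRank A)) ℝ,
      (∀ i a, 0 ≤ B i a) ∧ (∀ a b, 0 ≤ C a b) ∧ C.IsSymm ∧ A = B * C * Bᵀ := by
  classical
  have hne : {k : ℕ | ∃ B : Matrix m (Fin k) ℝ, ∃ C : Matrix (Fin k) (Fin k) ℝ,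
      (∀ i j, 0 ≤ B i j) ∧ (∀ i j, 0 ≤ C i j) ∧ C.IsSymm ∧ A = B * C * Bᵀ}.Nonempty :=
    ⟨_, _, _, fun i a => by simp [one_apply, apply_ite], fun _ _ => hA _ _, hAs.submatrix _,
      ((submatrix_equivFin_mul_mul_transpose 1 A).trans (by simp)).symm⟩
  exact Nat.sInf_mem hne

theorem sntRank_fromBlocks_le (U : Matrix m ι ℝ) (V : Matrix n ι ℝ) (hU : ∀ i a, 0 ≤ U i a)
    (hV : ∀ j a, 0 ≤ V j a) :
    sntRank (fromBlocks 0 (U * Vᵀ) (V * Uᵀ) 0) ≤ 2 * Fintype.card ι := by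
  classical
  have hfactor : fromBlocks 0 (U * Vᵀ) (V * Uᵀ) 0 =
      fromBlocks U 0 0 V * (fromBlocks 0 1 1 0 : Matrix (ι ⊕ ι) (ι ⊕ ι) ℝ) *
        (fromBlocks U 0 0 V)ᵀ := by
    simp [fromBlocks_multiply, fromBlocks_transpose]
  rw [hfactor, two_mul, ← Fintype.card_sum]
  refine sntRank_le_card _ _ ?_ ?_ ?_
  · rintro (i | i) (a | a) <;> simp [hU, hV]
  · rintro (a | a) (b | b) <;> simp [one_apply] <;> split_ifs <;> norm_num
  · simp [IsSymm, fromBlocks_transpose]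

theorem two_mul_nnRank_le_of_fromBlocks_eq {k : Type*} [Fintype k] (X : Matrix m n ℝ)
    (B : Matrix (m ⊕ n) k ℝ) (C : Matrix k k ℝ) (hB : ∀ i a, 0 ≤ B i a)
    (hC : ∀ a b, 0 ≤ C a b) (h : fromBlocks 0 X Xᵀ 0 = B * C * Bᵀ) :
    2 * nnRank X ≤ Fintype.card k := by
  rw [← fromRows_toRows B, fromRows_mul, transpose_fromRows,
    fromRows_mul_fromCols, fromBlocks_inj] at h
  obtain ⟨h₁₁, hX, -, h₂₂⟩ := h
  classical
  set B₁ := B.toRows₁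
  set B₂ := B.toRows₂
  have hB₁ : ∀ i a, 0 ≤ B₁ i a := fun _ _ => hB _ _
  have hB₂ : ∀ j a, 0 ≤ B₂ j a := fun _ _ => hB _ _
  have hCt : ∀ a b, 0 ≤ Cᵀ a b := fun _ _ => hC _ _
  have h₂₂t : B₂ * Cᵀ * B₂ᵀ = 0 := by
    simpa [transpose_mul, Matrix.mul_assoc] using congrArg transpose h₂₂.symm
  set P := nonzeroCols B₁
  set Q := nonzeroCols B₂
  have hPQ : nnRank X ≤ #(P \ Q) := by
    rw [hX, Matrix.mul_assoc, ← transpose_transpose C, ← transpose_mul]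
    refine nnRank_le_card_of_forall_notMem _ _ hB₁
      (fun _ _ => sum_nonneg fun _ _ => mul_nonneg (hB₂ _ _) (hCt _ _)) _ fun a ha i j => ?_
    rcases not_and_or.1 (mem_sdiff.not.1 ha) with ha | ha
    · rw [apply_eq_zero_of_notMem_nonzeroCols ha, zero_mul]
    · exact mul_eq_zero_of_right _
        (mul_apply_eq_zero_of_mul_mul_transpose_eq_zero hB₂ hCt h₂₂t (not_not.1 ha) j)
  have hQP : nnRank X ≤ #(Q \ P) := by
    rw [hX]
    refine nnRank_le_card_of_forall_notMem _ _
      (fun _ _ => sum_nonneg fun _ _ => mul_nonneg (hB₁ _ _) (hC _ _)) hB₂ _ fun b hb i j => ?_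
    rcases not_and_or.1 (mem_sdiff.not.1 hb) with hb | hb
    · rw [apply_eq_zero_of_notMem_nonzeroCols hb, mul_zero]
    · exact mul_eq_zero_of_left
        (mul_apply_eq_zero_of_mul_mul_transpose_eq_zero hB₁ hC h₁₁.symm (not_not.1 hb) i) _
  calc 2 * nnRank X ≤ #(P \ Q) + #(Q \ P) := by omega
    _ = #(P \ Q ∪ Q \ P) := (card_union_of_disjoint disjoint_sdiff_sdiff).symm
    _ ≤ Fintype.card k := card_le_univ _

end SNTRank

theorem stmt_10 {n₁ m₁ : ℕ} (X : Matrix (Fin n₁) (Fin m₁) ℝ)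
    (hX : ∀ i j, 0 ≤ X i j) :
    sntRank (Matrix.fromBlocks (0 : Matrix (Fin n₁) (Fin n₁) ℝ) X Xᵀ
      (0 : Matrix (Fin m₁) (Fin m₁) ℝ)) = 2 * nnRank X := by
  refine le_antisymm ?_ ?_
  · obtain ⟨U, V, hU, hV, hUV⟩ := exists_nnRank_factorization hX
    have hXt : Xᵀ = V * Uᵀ := by simpa [transpose_mul] using congrArg transpose hUV
    simpa [← hUV, ← hXt] using sntRank_fromBlocks_le U V hU hV
  · have hA : ∀ i j, 0 ≤ fromBlocks 0 X Xᵀ (0 : Matrix (Fin m₁) (Fin m₁) ℝ) i j := by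
      rintro (i | i) (j | j) <;> simp [hX]
    obtain ⟨B, C, hB, hC, -, hBC⟩ :=
      exists_sntRank_factorization hA (IsSymm.fromBlocks (by simp) rfl (by simp))
    simpa using two_mul_nnRank_le_of_fromBlocks_eq X B C hB hC hBC
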